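/- arXiv:1810.02501 — 5 statements merged into one kernel-verified Lean document; each statement's English description precedes it below -/
import Mathlib

section
/- For a Poisson DAG model, for any node j and any set S of non-descendants of j, E[X_j²] ≥ E[E(X_j | X_S) + E(X_j | X_S)²], i.e., the moments ratio E[X_j²] / E[E(X_j|X_S) + E(X_j|X_S)²] is at least 1. -/
open MeasureTheory Real

/-- In a Poisson DAG model, for any node `j` and any set `S` of non-descendants of `j`,
`E[X_j²] ≥ E[E(X_j|X_S) + E(X_j|X_S)²]`. -/
theorem stmt_2 {Ω : Type*} {m0 : MeasurableSpace Ω} (μ : Measure Ω) [IsProbabilityMeasure μ]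
    (X : Ω → ℝ) (mPa mS : MeasurableSpace Ω) (hPa : mPa ≤ m0) (hS : mS ≤ m0)
    (hX : Integrable X μ) (hX2 : Integrable (fun ω => X ω ^ 2) μ)
    (hW2 : Integrable (fun ω => ((μ[X | mPa]) ω) ^ 2) μ)
    (hS2 : Integrable (fun ω => (μ[X | mS]) ω + ((μ[X | mS]) ω) ^ 2) μ)
    -- conditional independence of `X_j` and `X_S` given the parents
    (hci : μ[X | mPa ⊔ mS] =ᵐ[μ] μ[X | mPa])
    -- Poisson conditional second moment: `E[X² | Pa, S] = E[X|Pa] + E[X|Pa]²`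
    (hpois : μ[(fun ω => X ω ^ 2) | mPa ⊔ mS]
        =ᵐ[μ] fun ω => (μ[X | mPa]) ω + ((μ[X | mPa]) ω) ^ 2) :
    ∫ ω, X ω ^ 2 ∂μ ≥ ∫ ω, ((μ[X | mS]) ω + ((μ[X | mS]) ω) ^ 2) ∂μ := by
  set W : Ω → ℝ := μ[X | mPa] with hWdef
  set Y : Ω → ℝ := μ[X | mS] with hYdef
  have hsup : mPa ⊔ mS ≤ m0 := sup_le hPa hS
  have hWint : Integrable W μ := integrable_condExp
  have hYint : Integrable Y μ := integrable_condExp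
  have hY2 : Integrable (fun ω => Y ω ^ 2) μ := by
    have h := hS2.sub hYint
    refine h.congr (Filter.Eventually.of_forall fun ω => ?_)
    simp [Pi.sub_apply]
  -- Y = E[W | mS]
  have hY_eq : Y =ᵐ[μ] μ[W | mS] := by
    have h1 : μ[X | mS] =ᵐ[μ] μ[μ[X | mPa ⊔ mS] | mS] :=
      (condExp_condExp_of_le le_sup_right hsup).symm
    exact h1.trans (condExp_congr_ae hci)
  -- E[X²] = E[W + W²]
  have hEX2 : ∫ ω, X ω ^ 2 ∂μ = ∫ ω, (W ω + W ω ^ 2) ∂μ := by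
    rw [← integral_condExp (f := fun ω => X ω ^ 2) (μ := μ) hsup]
    exact integral_congr_ae hpois
  -- E[Y] = E[W]
  have hEY : ∫ ω, Y ω ∂μ = ∫ ω, W ω ∂μ := by
    rw [hYdef, hWdef, integral_condExp hS, integral_condExp hPa]
  -- Integrability of Y * W
  have hYW : Integrable (fun ω => Y ω * W ω) μ := by
    refine Integrable.mono' ((hY2.add hW2).div_const 2) ?_ ?_
    · exact (hYint.aestronglyMeasurable.mul hWint.aestronglyMeasurable)
    · filter_upwards with ω
      calc ‖Y ω * W ω‖ = |Y ω * W ω| := rfl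
        _ ≤ (Y ω ^ 2 + W ω ^ 2) / 2 := by nlinarith [abs_nonneg (Y ω * W ω), abs_mul_abs_self (Y ω * W ω), sq_abs (Y ω), sq_abs (W ω), sq_nonneg (|Y ω| - |W ω|), abs_mul (Y ω) (W ω), le_abs_self (Y ω * W ω)]
  -- E[Y * W] = E[Y²]
  have hEYW : ∫ ω, Y ω * W ω ∂μ = ∫ ω, Y ω ^ 2 ∂μ := by
    have hmeas : StronglyMeasurable[mS] Y := stronglyMeasurable_condExp
    have hmul : μ[(fun ω => Y ω * W ω) | mS] =ᵐ[μ] fun ω => Y ω * (μ[W | mS]) ω :=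
      condExp_mul_of_stronglyMeasurable_left hmeas hYW hWint
    calc ∫ ω, Y ω * W ω ∂μ = ∫ ω, (μ[(fun ω => Y ω * W ω) | mS]) ω ∂μ :=
          (integral_condExp (f := fun ω => Y ω * W ω) (μ := μ) hS).symm
      _ = ∫ ω, Y ω * (μ[W | mS]) ω ∂μ := integral_congr_ae hmul
      _ = ∫ ω, Y ω ^ 2 ∂μ := by
          refine integral_congr_ae ?_
          filter_upwards [hY_eq] with ω hω
          rw [← hω]; ring
  -- E[Y²] ≤ E[W²]
  have hkey : ∫ ω, Y ω ^ 2 ∂μ ≤ ∫ ω, W ω ^ 2 ∂μ := by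
    have hnn : 0 ≤ ∫ ω, (W ω - Y ω) ^ 2 ∂μ :=
      integral_nonneg fun ω => sq_nonneg _
    have hexp : ∫ ω, (W ω - Y ω) ^ 2 ∂μ
        = ∫ ω, W ω ^ 2 ∂μ - 2 * ∫ ω, Y ω * W ω ∂μ + ∫ ω, Y ω ^ 2 ∂μ := by
      have h1 : ∫ ω, (W ω - Y ω) ^ 2 ∂μ
          = ∫ ω, (W ω ^ 2 - 2 * (Y ω * W ω) + Y ω ^ 2) ∂μ := by
        refine integral_congr_ae ?_
        filter_upwards with ω; ring
      have hB : Integrable (fun ω => 2 * (Y ω * W ω)) μ := hYW.const_mul 2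
      have hA : Integrable (fun ω => W ω ^ 2 - 2 * (Y ω * W ω)) μ := hW2.sub hB
      rw [h1, integral_add hA hY2, integral_sub hW2 hB, integral_const_mul]
    rw [hexp, hEYW] at hnn
    linarith
  -- conclude
  have hL : ∫ ω, (Y ω + Y ω ^ 2) ∂μ = ∫ ω, Y ω ∂μ + ∫ ω, Y ω ^ 2 ∂μ :=
    integral_add hYint hY2
  have hR : ∫ ω, (W ω + W ω ^ 2) ∂μ = ∫ ω, W ω ∂μ + ∫ ω, W ω ^ 2 ∂μ :=
    integral_add hWint hW2
  rw [hEX2]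
  calc ∫ ω, (Y ω + Y ω ^ 2) ∂μ = ∫ ω, Y ω ∂μ + ∫ ω, Y ω ^ 2 ∂μ := hL
    _ ≤ ∫ ω, W ω ∂μ + ∫ ω, W ω ^ 2 ∂μ := by rw [← hEY]; linarith
    _ = ∫ ω, (W ω + W ω ^ 2) ∂μ := hR.symm
end

section
/- In a Poisson DAG model, for any node j and any subset S of non-descendants of j, the identity E[Var(E(X_j | X_{Pa(j)}) | X_S)] = E[X_j²] − E[E(X_j | X_S) + E(X_j | X_S)²] holds. In particular the moments-ratio gap equals the expected conditional variance of the rate. -/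
open MeasureTheory Real

/-- In a Poisson DAG model, `E[Var(E(X_j|X_Pa) | X_S)] = E[X_j²] − E[E(X_j|X_S) + E(X_j|X_S)²]`:
the moments-ratio gap equals the expected conditional variance of the rate. -/
theorem stmt_3 {Ω : Type*} {m0 : MeasurableSpace Ω} (μ : Measure Ω) [IsProbabilityMeasure μ]
    (X : Ω → ℝ) (mPa mS : MeasurableSpace Ω) (hPa : mPa ≤ m0) (hS : mS ≤ m0)
    (hX : Integrable X μ) (hX2 : Integrable (fun ω => X ω ^ 2) μ)
    (hW2 : Integrable (fun ω => ((μ[X | mPa]) ω) ^ 2) μ)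
    (hWS2 : Integrable (fun ω => ((μ[(μ[X | mPa]) | mS]) ω) ^ 2) μ)
    (hS2 : Integrable (fun ω => (μ[X | mS]) ω + ((μ[X | mS]) ω) ^ 2) μ)
    (hci : μ[X | mPa ⊔ mS] =ᵐ[μ] μ[X | mPa])
    (hpois : μ[(fun ω => X ω ^ 2) | mPa ⊔ mS]
        =ᵐ[μ] fun ω => (μ[X | mPa]) ω + ((μ[X | mPa]) ω) ^ 2) :
    ∫ ω, (((μ[X | mPa]) ω) ^ 2 - ((μ[(μ[X | mPa]) | mS]) ω) ^ 2) ∂μ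
      = ∫ ω, X ω ^ 2 ∂μ - ∫ ω, ((μ[X | mS]) ω + ((μ[X | mS]) ω) ^ 2) ∂μ := by
  have hPaS : mPa ⊔ mS ≤ m0 := sup_le hPa hS
  have hIW : Integrable (μ[X | mPa]) μ := integrable_condExp
  -- tower: E[E[X|Pa]|S] = E[X|S] a.e.
  have hV : μ[(μ[X | mPa]) | mS] =ᵐ[μ] μ[X | mS] := by
    calc μ[(μ[X | mPa]) | mS] =ᵐ[μ] μ[(μ[X | mPa ⊔ mS]) | mS] := condExp_congr_ae hci.symm
      _ =ᵐ[μ] μ[X | mS] := condExp_condExp_of_le le_sup_right hPaS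
  -- ∫ (W + W²) = ∫ X²
  have h1 : ∫ ω, ((μ[X | mPa]) ω + ((μ[X | mPa]) ω) ^ 2) ∂μ = ∫ ω, X ω ^ 2 ∂μ := by
    rw [← integral_congr_ae hpois, integral_condExp hPaS]
  have hWint : ∫ ω, (μ[X | mPa]) ω ∂μ = ∫ ω, X ω ∂μ := integral_condExp hPa
  have hadd : ∫ ω, ((μ[X | mPa]) ω + ((μ[X | mPa]) ω) ^ 2) ∂μ
      = ∫ ω, (μ[X | mPa]) ω ∂μ + ∫ ω, ((μ[X | mPa]) ω) ^ 2 ∂μ := integral_add hIW hW2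
  have h2 : ∫ ω, ((μ[X | mPa]) ω) ^ 2 ∂μ = ∫ ω, X ω ^ 2 ∂μ - ∫ ω, X ω ∂μ := by
    rw [hadd, hWint] at h1; linarith
  -- ∫ V² = ∫ E[X|S]²
  have h3 : ∫ ω, ((μ[(μ[X | mPa]) | mS]) ω) ^ 2 ∂μ = ∫ ω, ((μ[X | mS]) ω) ^ 2 ∂μ :=
    integral_congr_ae (hV.mono fun ω h => by dsimp only; rw [h])
  have hIS : Integrable (μ[X | mS]) μ := integrable_condExp
  have hIS2 : Integrable (fun ω => ((μ[X | mS]) ω) ^ 2) μ := by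
    have := hS2.sub hIS
    simpa using this.congr (by filter_upwards with ω; simp [Pi.sub_apply])
  have h4 : ∫ ω, ((μ[X | mS]) ω + ((μ[X | mS]) ω) ^ 2) ∂μ
      = ∫ ω, (μ[X | mS]) ω ∂μ + ∫ ω, ((μ[X | mS]) ω) ^ 2 ∂μ := integral_add hIS hIS2
  have hSint : ∫ ω, (μ[X | mS]) ω ∂μ = ∫ ω, X ω ∂μ := integral_condExp hS
  rw [integral_sub hW2 hWS2, h2, h3, h4, hSint]
  ring
end

section
/- In a Poisson DAG model with non-degenerate rate functions, for a node j and S ⊆ Nd(j), equality E[X_j²] = E[E(X_j | X_S) + E(X_j | X_S)²] holds if and only if E(X_j | X_{Pa(j)}) is almost surely a measurable function of X_S; in particular, if Pa(j) ⊆ S then equality holds. -/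
open MeasureTheory ProbabilityTheory

/-!
Write `W = E[X | Pa]`. Conditional independence turns `E[X | S]` into `E[W | S]`, and the Poisson
identity `E[X² | Pa, S] = W + W²` gives `E[X²] = E[W] + E[W²]`. Since `E[W] = E[X] = E[E[X | S]]`,
the claimed equality reduces to `E[W²] = E[E[W | S]²]`. By the law of total variance the gap
`E[W²] - E[E[W | S]²]` is `E[(W - E[W | S])²]`, which vanishes exactly when `W = E[W | S]` a.s.
-/

section
variable {Ω : Type*} {m m₀ : MeasurableSpace Ω} {μ : Measure[m₀] Ω} [IsFiniteMeasure μ]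
  {W : Ω → ℝ}

lemma integral_sq_sub_condExp (hm : m ≤ m₀) (hW : MemLp W 2 μ) :
    ∫ ω, (W ω - (μ[W | m]) ω) ^ 2 ∂μ = ∫ ω, W ω ^ 2 ∂μ - ∫ ω, (μ[W | m]) ω ^ 2 ∂μ :=
  calc ∫ ω, (W ω - (μ[W | m]) ω) ^ 2 ∂μ
    _ = ∫ ω, (Var[W; μ | m]) ω ∂μ := (integral_condExp hm).symm
    _ = ∫ ω, ((μ[W ^ 2 | m]) ω - (μ[W | m]) ω ^ 2) ∂μ :=
      integral_congr_ae (condVar_ae_eq_condExp_sq_sub_sq_condExp hm hW)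
    _ = ∫ ω, W ω ^ 2 ∂μ - ∫ ω, (μ[W | m]) ω ^ 2 ∂μ := by
      rw [integral_sub integrable_condExp (hW.condExp one_le_two).integrable_sq,
        integral_condExp hm]
      rfl

lemma ae_eq_condExp_iff_integral_sq_eq (hm : m ≤ m₀) (hW : MemLp W 2 μ) :
    W =ᵐ[μ] μ[W | m] ↔ ∫ ω, W ω ^ 2 ∂μ = ∫ ω, (μ[W | m]) ω ^ 2 ∂μ := by
  refine ⟨fun h => integral_congr_ae (h.fun_comp (· ^ 2)), fun h => ?_⟩
  have hgap : ∫ ω, (W ω - (μ[W | m]) ω) ^ 2 ∂μ = 0 := by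
    rw [integral_sq_sub_condExp hm hW, h, sub_self]
  have hsq_int : Integrable (fun ω => (W ω - (μ[W | m]) ω) ^ 2) μ :=
    (hW.sub (hW.condExp one_le_two)).integrable_sq
  filter_upwards [(integral_eq_zero_iff_of_nonneg (fun _ => sq_nonneg _) hsq_int).1 hgap]
    with ω hω
  exact sub_eq_zero.1 (pow_eq_zero_iff two_ne_zero |>.1 hω)

end

theorem stmt_4_general {Ω : Type*} {m0 : MeasurableSpace Ω} (μ : Measure Ω) [IsProbabilityMeasure μ]
    (X : Ω → ℝ) (mPa mS : MeasurableSpace Ω) (hPa : mPa ≤ m0) (hS : mS ≤ m0)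
    (hW2 : Integrable (fun ω => ((μ[X | mPa]) ω) ^ 2) μ)
    (hci : μ[X | mPa ⊔ mS] =ᵐ[μ] μ[X | mPa])
    (hpois : μ[(fun ω => X ω ^ 2) | mPa ⊔ mS]
        =ᵐ[μ] fun ω => (μ[X | mPa]) ω + ((μ[X | mPa]) ω) ^ 2) :
    ((∫ ω, X ω ^ 2 ∂μ = ∫ ω, ((μ[X | mS]) ω + ((μ[X | mS]) ω) ^ 2) ∂μ) ↔
      μ[X | mPa] =ᵐ[μ] μ[(μ[X | mPa]) | mS]) ∧
    (mPa ≤ mS → ∫ ω, X ω ^ 2 ∂μ = ∫ ω, ((μ[X | mS]) ω + ((μ[X | mS]) ω) ^ 2) ∂μ) := by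
  set W := μ[X | mPa]
  have hW : MemLp W 2 μ :=
    (memLp_two_iff_integrable_sq integrable_condExp.aestronglyMeasurable).2 hW2
  have hZY : μ[X | mS] =ᵐ[μ] μ[W | mS] :=
    (condExp_condExp_of_le le_sup_right (sup_le hPa hS)).symm.trans (condExp_congr_ae hci)
  have hZ : MemLp (μ[X | mS]) 2 μ := (hW.condExp one_le_two).ae_eq hZY.symm
  have hEX2 : ∫ ω, X ω ^ 2 ∂μ = ∫ ω, W ω ∂μ + ∫ ω, W ω ^ 2 ∂μ := by
    rw [← integral_condExp (sup_le hPa hS), integral_congr_ae hpois,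
      integral_add integrable_condExp hW.integrable_sq]
  have hiff : (∫ ω, X ω ^ 2 ∂μ = ∫ ω, ((μ[X | mS]) ω + ((μ[X | mS]) ω) ^ 2) ∂μ) ↔
      W =ᵐ[μ] μ[W | mS] := by
    rw [hEX2, integral_add integrable_condExp hZ.integrable_sq, integral_condExp hPa,
      integral_condExp hS, add_right_inj, ae_eq_condExp_iff_integral_sq_eq hS hW]
    exact Eq.congr_right (integral_congr_ae (hZY.fun_comp (· ^ 2)))
  refine ⟨hiff, fun hPaS => hiff.2 ?_⟩
  rw [condExp_of_stronglyMeasurable hS (stronglyMeasurable_condExp.mono hPaS) integrable_condExp]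

/-- In a Poisson DAG model with non-degenerate rates, equality
`E[X_j²] = E[E(X_j|X_S) + E(X_j|X_S)²]` holds iff `E(X_j|X_Pa)` is a.s. equal to its
`σ(X_S)`-measurable projection; in particular if `Pa(j) ⊆ S` equality holds. -/
theorem stmt_4 {Ω : Type*} {m0 : MeasurableSpace Ω} (μ : Measure Ω) [IsProbabilityMeasure μ]
    (X : Ω → ℝ) (mPa mS : MeasurableSpace Ω) (hPa : mPa ≤ m0) (hS : mS ≤ m0)
    (hX : Integrable X μ) (hX2 : Integrable (fun ω => X ω ^ 2) μ)
    (hW2 : Integrable (fun ω => ((μ[X | mPa]) ω) ^ 2) μ)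
    (hS2 : Integrable (fun ω => (μ[X | mS]) ω + ((μ[X | mS]) ω) ^ 2) μ)
    (hci : μ[X | mPa ⊔ mS] =ᵐ[μ] μ[X | mPa])
    (hpois : μ[(fun ω => X ω ^ 2) | mPa ⊔ mS]
        =ᵐ[μ] fun ω => (μ[X | mPa]) ω + ((μ[X | mPa]) ω) ^ 2) :
    ((∫ ω, X ω ^ 2 ∂μ = ∫ ω, ((μ[X | mS]) ω + ((μ[X | mS]) ω) ^ 2) ∂μ) ↔
      μ[X | mPa] =ᵐ[μ] μ[(μ[X | mPa]) | mS]) ∧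
    (mPa ≤ mS → ∫ ω, X ω ^ 2 ∂μ = ∫ ω, ((μ[X | mS]) ω + ((μ[X | mS]) ω) ^ 2) ∂μ) :=
  stmt_4_general μ X mPa mS hPa hS hW2 hci hpois
end

section
/- For independent Poisson random variables X₁ ~ Poisson(λ₁) and X₂ ~ Poisson(λ₂), both satisfy E[X_j²] = E[X_j] + E[X_j]², whereas if X₂ | X₁ ~ Poisson(g(X₁)) for a non-constant positive function g, then E[X₂²] > E[X₂] + E[X₂]². Hence the bivariate graphs X₁⊥X₂, X₁→X₂, and X₂→X₁ are mutually distinguishable from the two moment ratios E[X_j²]/(E[X_j]+E[X_j]²). -/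
/-!
For `N ~ Po(r)` the Stein–Chen identity `E[N f(N)] = r E[f(N + 1)]` gives `E[N] = r` and
`E[N²] = r E[N + 1] = r + r²`, i.e. `E[N²] = E[N] + E[N]²`. If instead `X₂` is Poisson
conditionally on `X₁`, with rate `Y = g(X₁)`, the tower property gives `E[X₂] = E[Y]` and
`E[X₂²] = E[Y] + E[Y²]`, and `E[Y²] > E[Y]²` because `Y`, not being a.s. constant, has positive
variance.
-/

open MeasureTheory ProbabilityTheory Real
open scoped NNReal
open scoped Nat

namespace ProbabilityTheory

lemma poisson_weight_succ_mul (r : ℝ≥0) (n : ℕ) :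
    exp (-r) * r ^ (n + 1) / (n + 1)! * (n + 1 : ℕ) = r * (exp (-r) * r ^ n / n !) := by
  rw [Nat.factorial_succ]
  push_cast
  field_simp
  ring

lemma hasSum_poisson_mul_natCast_mul {r : ℝ≥0} {f : ℕ → ℝ} {s : ℝ}
    (hf : HasSum (fun n ↦ exp (-r) * r ^ n / n ! * f (n + 1)) s) :
    HasSum (fun n ↦ exp (-r) * r ^ n / n ! * (n * f n)) (r * s) := by
  rw [← hasSum_nat_add_iff' 1]
  simpa [← mul_assoc, ← poisson_weight_succ_mul r, mul_right_comm _ (_ + 1 : ℝ)]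
    using hf.mul_left (r : ℝ)

lemma hasSum_poisson_mul_natCast (r : ℝ≥0) :
    HasSum (fun n ↦ exp (-r) * r ^ n / n ! * n) r := by
  have h := hasSum_poisson_mul_natCast_mul (f := fun _ ↦ 1)
    (by simpa using hasSum_one_poissonMeasure r)
  simpa only [mul_one] using h

lemma hasSum_poisson_mul_natCast_sq (r : ℝ≥0) :
    HasSum (fun n ↦ exp (-r) * r ^ n / n ! * n ^ 2) (r + r ^ 2) := by
  have hshift : HasSum (fun n ↦ exp (-r) * r ^ n / n ! * ((n + 1 : ℕ) : ℝ)) (r + 1) := by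
    simpa [mul_add] using (hasSum_poisson_mul_natCast r).add (hasSum_one_poissonMeasure r)
  convert hasSum_poisson_mul_natCast_mul hshift using 1
  · ext n; ring
  · ring

lemma integral_natCast_poissonMeasure (r : ℝ≥0) : ∫ n, (n : ℝ) ∂Po(r) = r := by
  simpa [integral_poissonMeasure] using (hasSum_poisson_mul_natCast r).tsum_eq

lemma integral_natCast_sq_poissonMeasure (r : ℝ≥0) :
    ∫ n, (n : ℝ) ^ 2 ∂Po(r) = r + r ^ 2 := by
  simpa [integral_poissonMeasure] using (hasSum_poisson_mul_natCast_sq r).tsum_eq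

variable {Ω : Type*} {m0 : MeasurableSpace Ω} {μ : Measure Ω}

lemma integral_comp_of_map_eq_poissonMeasure {X : Ω → ℕ} {r : ℝ≥0} (hX : μ.map X = Po(r))
    (f : ℕ → ℝ) : ∫ ω, f (X ω) ∂μ = ∫ n, f n ∂Po(r) := by
  have hXm : AEMeasurable X μ := .of_map_ne_zero (hX ▸ IsProbabilityMeasure.ne_zero _)
  rw [← hX, integral_map hXm .of_discrete]

lemma integral_sq_eq_integral_add_sq_of_map_eq_poissonMeasure {X : Ω → ℕ} {r : ℝ≥0}
    (hX : μ.map X = Po(r)) :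
    ∫ ω, (X ω : ℝ) ^ 2 ∂μ = ∫ ω, (X ω : ℝ) ∂μ + (∫ ω, (X ω : ℝ) ∂μ) ^ 2 := by
  rw [integral_comp_of_map_eq_poissonMeasure hX (fun n ↦ (n : ℝ) ^ 2),
    integral_comp_of_map_eq_poissonMeasure hX (fun n ↦ (n : ℝ)),
    integral_natCast_sq_poissonMeasure, integral_natCast_poissonMeasure]

lemma sq_integral_lt_integral_sq [IsProbabilityMeasure μ] {Y : Ω → ℝ} (hY : MemLp Y 2 μ)
    (hY_const : ¬ ∃ c, Y =ᵐ[μ] fun _ ↦ c) : (∫ ω, Y ω ∂μ) ^ 2 < ∫ ω, Y ω ^ 2 ∂μ := by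
  have hvar : 0 < Var[Y; μ] :=
    (variance_nonneg Y μ).lt_of_ne fun h ↦
      hY_const ⟨_, ae_eq_integral_of_variance_eq_zero hY h.symm⟩
  rw [variance_eq_sub hY] at hvar
  simpa [sub_pos] using hvar

lemma integral_add_sq_lt_integral_sq_of_condExp [IsProbabilityMeasure μ] {m : MeasurableSpace Ω}
    (hm : m ≤ m0) {Z Y : Ω → ℝ} (hZ : μ[Z | m] =ᵐ[μ] Y)
    (hZ_sq : μ[fun ω ↦ Z ω ^ 2 | m] =ᵐ[μ] fun ω ↦ Y ω + Y ω ^ 2)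
    (hY_const : ¬ ∃ c, Y =ᵐ[μ] fun _ ↦ c) :
    ∫ ω, Z ω ∂μ + (∫ ω, Z ω ∂μ) ^ 2 < ∫ ω, Z ω ^ 2 ∂μ := by
  have hY : Integrable Y μ := integrable_condExp.congr hZ
  have hY_sq : Integrable (fun ω ↦ Y ω ^ 2) μ :=
    ((integrable_condExp.congr hZ_sq).sub hY).congr (ae_of_all _ fun ω ↦ by simp)
  have hEZ : ∫ ω, Z ω ∂μ = ∫ ω, Y ω ∂μ := (integral_condExp hm).symm.trans (integral_congr_ae hZ)
  have hEZ_sq : ∫ ω, Z ω ^ 2 ∂μ = ∫ ω, Y ω ∂μ + ∫ ω, Y ω ^ 2 ∂μ := by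
    rw [← integral_condExp hm, integral_congr_ae hZ_sq, integral_add hY hY_sq]
  have hJensen := sq_integral_lt_integral_sq
    ((memLp_two_iff_integrable_sq hY.aestronglyMeasurable).2 hY_sq) hY_const
  rw [hEZ, hEZ_sq]
  linarith

end ProbabilityTheory

theorem stmt_5_general {Ω : Type*} {m0 : MeasurableSpace Ω} (μ : Measure Ω) [IsProbabilityMeasure μ]
    (X₁ X₂ : Ω → ℕ) (l₁ : ℝ≥0)
    (g : ℕ → ℝ)
    (m1 : MeasurableSpace Ω) (hm1 : m1 ≤ m0)
    (hmap : @Measure.map Ω ℕ m0 inferInstance X₁ μ = poissonMeasure l₁)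
    (hcond1 : μ[(fun ω => (X₂ ω : ℝ)) | m1] =ᵐ[μ] fun ω => g (X₁ ω))
    (hcond2 : μ[(fun ω => ((X₂ ω : ℝ)) ^ 2) | m1] =ᵐ[μ] fun ω => g (X₁ ω) + g (X₁ ω) ^ 2)
    (hnonconst : ¬ ∃ c : ℝ, (fun ω => g (X₁ ω)) =ᵐ[μ] fun _ => c) :
    (∫ ω, ((X₁ ω : ℝ)) ^ 2 ∂μ = ∫ ω, (X₁ ω : ℝ) ∂μ + (∫ ω, (X₁ ω : ℝ) ∂μ) ^ 2) ∧
    (∫ ω, ((X₂ ω : ℝ)) ^ 2 ∂μ > ∫ ω, (X₂ ω : ℝ) ∂μ + (∫ ω, (X₂ ω : ℝ) ∂μ) ^ 2) :=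
  ⟨integral_sq_eq_integral_add_sq_of_map_eq_poissonMeasure hmap,
    integral_add_sq_lt_integral_sq_of_condExp hm1 hcond1 hcond2 hnonconst⟩

/-- Bivariate identifiability: a Poisson marginal satisfies `E[X²] = E[X] + E[X]²`,
while a node whose conditional distribution given its parent is Poisson with a
non-constant rate satisfies the strict inequality `E[X²] > E[X] + E[X]²`;
hence `G₁`, `G₂`, `G₃` are distinguishable via the two moments ratios. -/
theorem stmt_5 {Ω : Type*} {m0 : MeasurableSpace Ω} (μ : Measure Ω) [IsProbabilityMeasure μ]
    (X₁ X₂ : Ω → ℕ) (l₁ : ℝ≥0) (hl₁ : 0 < l₁)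
    (g : ℕ → ℝ) (hg : ∀ n, 0 < g n)
    (m1 : MeasurableSpace Ω) (hm1 : m1 ≤ m0)
    (hX1meas : @Measurable Ω ℕ m1 ⊤ X₁)
    (hmap : @Measure.map Ω ℕ m0 inferInstance X₁ μ = poissonMeasure l₁)
    (hcond1 : μ[(fun ω => (X₂ ω : ℝ)) | m1] =ᵐ[μ] fun ω => g (X₁ ω))
    (hcond2 : μ[(fun ω => ((X₂ ω : ℝ)) ^ 2) | m1] =ᵐ[μ] fun ω => g (X₁ ω) + g (X₁ ω) ^ 2)
    (hint1 : Integrable (fun ω => ((X₁ ω : ℝ)) ^ 2) μ)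
    (hint2 : Integrable (fun ω => ((X₂ ω : ℝ)) ^ 2) μ)
    (hnonconst : ¬ ∃ c : ℝ, (fun ω => g (X₁ ω)) =ᵐ[μ] fun _ => c) :
    (∫ ω, ((X₁ ω : ℝ)) ^ 2 ∂μ = ∫ ω, (X₁ ω : ℝ) ∂μ + (∫ ω, (X₁ ω : ℝ) ∂μ) ^ 2) ∧
    (∫ ω, ((X₂ ω : ℝ)) ^ 2 ∂μ > ∫ ω, (X₂ ω : ℝ) ∂μ + (∫ ω, (X₂ ω : ℝ) ∂μ) ^ 2) :=
  stmt_5_general μ X₁ X₂ l₁ g m1 hm1 hmap hcond1 hcond2 hnonconst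
end

section
/- Let Q be a symmetric positive definite matrix partitioned into blocks (Q_{SS}, Q_{S^cS}) with λ_min(Q_{SS}) > 0 and the incoherence condition ‖Q_{S^cS} Q_{SS}^{−1}‖_{∞,op} ≤ 1 − α for some α ∈ (0,1]. Suppose vectors W, R, Z̃_S with ‖Z̃_S‖_∞ ≤ 1 satisfy Q_{S^cS}Q_{SS}^{−1}(W_S − R_S − λZ̃_S) = W_{S^c} − R_{S^c} − λZ̃_{S^c}. If max(‖W‖_∞, ‖R‖_∞) ≤ λα/(4(2−α)), then ‖Z̃_{S^c}‖_∞ ≤ (1−α) + α/2 < 1. -/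
open Matrix Real

/-- Strict dual feasibility step of the primal-dual witness argument: under the
incoherence condition `‖Q_{S^cS} Q_{SS}⁻¹‖_{∞,op} ≤ 1 − α` and the stated block
equation, if `max(‖W‖_∞, ‖R‖_∞) ≤ λα/(4(2−α))` then
`‖Z̃_{S^c}‖_∞ ≤ (1−α) + α/2 < 1`. -/
theorem stmt_14 {s sc : Type*} [Fintype s] [Fintype sc] [DecidableEq s]
    (Q_SS : Matrix s s ℝ) (Q_ScS : Matrix sc s ℝ)
    (hQ : Q_SS.PosDef) (α lam : ℝ) (hα : 0 < α) (hα1 : α ≤ 1) (hlam : 0 < lam)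
    (hinc : ∀ i, ∑ j, |(Q_ScS * Q_SS⁻¹) i j| ≤ 1 - α)
    (W_S R_S Z_S : s → ℝ) (W_Sc R_Sc Z_Sc : sc → ℝ)
    (hZS : ∀ j, |Z_S j| ≤ 1)
    (heq : (Q_ScS * Q_SS⁻¹).mulVec (fun j => W_S j - R_S j - lam * Z_S j)
      = fun i => W_Sc i - R_Sc i - lam * Z_Sc i)
    (hW : ∀ j, |W_S j| ≤ lam * α / (4 * (2 - α)))
    (hWc : ∀ i, |W_Sc i| ≤ lam * α / (4 * (2 - α)))
    (hR : ∀ j, |R_S j| ≤ lam * α / (4 * (2 - α)))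
    (hRc : ∀ i, |R_Sc i| ≤ lam * α / (4 * (2 - α))) :
    (∀ i, |Z_Sc i| ≤ (1 - α) + α / 2) ∧ (1 - α) + α / 2 < 1 := by

  have h2a : (0:ℝ) < 2 - α := by linarith
  set ε := lam * α / (4 * (2 - α)) with hεdef
  have hεnn : 0 ≤ ε := by positivity
  constructor
  · intro i
    have hvb : ∀ j, |W_S j - R_S j - lam * Z_S j| ≤ ε + ε + lam := by
      intro j
      have h1 := hW j
      have h2 := hR j
      have h3 : |lam * Z_S j| ≤ lam := by
        rw [abs_mul, abs_of_pos hlam]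
        nlinarith [hZS j]
      calc |W_S j - R_S j - lam * Z_S j|
          ≤ |W_S j - R_S j| + |lam * Z_S j| := abs_sub _ _
        _ ≤ |W_S j| + |R_S j| + |lam * Z_S j| := by
            have := abs_sub (W_S j) (R_S j); linarith
        _ ≤ ε + ε + lam := by linarith
    have hm : |(Q_ScS * Q_SS⁻¹).mulVec (fun j => W_S j - R_S j - lam * Z_S j) i|
        ≤ (1 - α) * (ε + ε + lam) := by
      have hM : ∀ j ∈ Finset.univ, |(Q_ScS * Q_SS⁻¹) i j * (W_S j - R_S j - lam * Z_S j)|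
          ≤ |(Q_ScS * Q_SS⁻¹) i j| * (ε + ε + lam) := by
        intro j _
        rw [abs_mul]
        exact mul_le_mul_of_nonneg_left (hvb j) (abs_nonneg _)
      calc |(Q_ScS * Q_SS⁻¹).mulVec (fun j => W_S j - R_S j - lam * Z_S j) i|
          = |∑ j, (Q_ScS * Q_SS⁻¹) i j * (W_S j - R_S j - lam * Z_S j)| := by
            simp [Matrix.mulVec, dotProduct]
        _ ≤ ∑ j, |(Q_ScS * Q_SS⁻¹) i j * (W_S j - R_S j - lam * Z_S j)| :=
            Finset.abs_sum_le_sum_abs _ _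
        _ ≤ ∑ j, |(Q_ScS * Q_SS⁻¹) i j| * (ε + ε + lam) := Finset.sum_le_sum hM
        _ = (∑ j, |(Q_ScS * Q_SS⁻¹) i j|) * (ε + ε + lam) := by rw [Finset.sum_mul]
        _ ≤ (1 - α) * (ε + ε + lam) := by
            apply mul_le_mul_of_nonneg_right (hinc i)
            linarith
    have heqi := congrFun heq i
    have hz : lam * Z_Sc i = W_Sc i - R_Sc i
        - (Q_ScS * Q_SS⁻¹).mulVec (fun j => W_S j - R_S j - lam * Z_S j) i := by
      rw [heqi]; ring
    have habs : |lam * Z_Sc i| ≤ ε + ε + (1 - α) * (ε + ε + lam) := by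
      rw [hz]
      have h1 := hWc i
      have h2 := hRc i
      have h3 := abs_sub (W_Sc i - R_Sc i)
        ((Q_ScS * Q_SS⁻¹).mulVec (fun j => W_S j - R_S j - lam * Z_S j) i)
      have h4 := abs_sub (W_Sc i) (R_Sc i)
      linarith
    have hεeq : ε * (4 * (2 - α)) = lam * α := by
      rw [hεdef]; field_simp
    have hla : lam * |Z_Sc i| = |lam * Z_Sc i| := by
      rw [abs_mul, abs_of_pos hlam]
    have hfin : lam * |Z_Sc i| ≤ lam * ((1 - α) + α / 2) := by
      rw [hla]; nlinarith [habs, hεeq]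
    exact le_of_mul_le_mul_left hfin hlam
  · linarith
end
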